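/- arXiv:1405.3576 — 2 statements merged into one kernel-verified Lean document; each statement's English description precedes it below -/
import Mathlib

section
/- The set of reset words of the three-state DFA ℬ equals I, i.e. Syn(ℬ) = I. -/
/-- The transition function of a DFA extended to words (read left to right). -/
def deltaStar {Q A : Type} (δ : Q → A → Q) (q : Q) (w : List A) : Q :=
  w.foldl δ q

/-- `w` is a reset word for the DFA with transition function `δ`. -/
def IsReset {Q A : Type} (δ : Q → A → Q) (w : List A) : Prop :=
  ∀ q q' : Q, deltaStar δ q w = deltaStar δ q' w

/-- The set of reset words of a DFA. -/
def Syn {Q A : Type} (δ : Q → A → Q) : Set (List A) :=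
  {w | IsReset δ w}

/-- The alphabet Δ = Σ ∪ {x,y,z}: `Sum.inl a` is a letter of Σ, and
`Sum.inr 0`, `Sum.inr 1`, `Sum.inr 2` are the new letters x, y, z. -/
abbrev Alph (σ : Type) : Type := σ ⊕ Fin 3

def xL {σ : Type} : Alph σ := Sum.inr 0
def yL {σ : Type} : Alph σ := Sum.inr 1
def zL {σ : Type} : Alph σ := Sum.inr 2

/-- `w ∈ (Σ ∪ {x})*`, i.e. `w` contains no occurrence of the letters y and z. -/
def noYZ {σ : Type} (w : List (Alph σ)) : Prop := yL ∉ w ∧ zL ∉ w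

/-- L₁ = (Σ∪{x})* y Δ* -/
def L1 {σ : Type} : Set (List (Alph σ)) :=
  {w | ∃ u v, noYZ u ∧ w = u ++ yL :: v}

/-- L₂ = (Σ∪{x})* z Δ⁺ -/
def L2 {σ : Type} : Set (List (Alph σ)) :=
  {w | ∃ u v, noYZ u ∧ v ≠ [] ∧ w = u ++ zL :: v}

/-- The ideal language I = L₁ ∪ L₂. -/
def ISet {σ : Type} : Set (List (Alph σ)) := L1 ∪ L2

/-- The 3-state DFA ℬ: states `0 = p₁`, `1 = p₂`, `2 = s` (the sink). -/
def tauB {σ : Type} (p : Fin 3) (a : Alph σ) : Fin 3 :=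
  if p = 0 then
    match a with
    | Sum.inl _ => 0                                -- τ(p₁,a) = p₁ for a ∈ Σ
    | Sum.inr k => if k = 0 then 0                  -- τ(p₁,x) = p₁
                   else if k = 1 then 2             -- τ(p₁,y) = s
                   else 1                            -- τ(p₁,z) = p₂
  else 2                                             -- τ(p₂,·) = τ(s,·) = s

/-! Since `s` is a sink, a reset word must send every state to `s`. Any nonempty word sends
`p₂` to `s`, and a word sends `p₁` to `s` exactly when it lies in `I`: reading letters of
`Σ ∪ {x}` keeps `p₁` fixed, `y` goes straight to `s`, and `z` goes to `s` after one more letter.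
As `[] ∉ I`, both conditions together say `w ∈ I`. -/

theorem deltaStar_cons {Q A : Type} (δ : Q → A → Q) (q : Q) (a : A) (w : List A) :
    deltaStar δ q (a :: w) = deltaStar δ (δ q a) w := rfl

theorem deltaStar_of_isSink {Q A : Type} {δ : Q → A → Q} {s : Q} (hs : ∀ a, δ s a = s)
    (w : List A) : deltaStar δ s w = s :=
  List.foldl_fixed' hs w

theorem isReset_iff_forall_deltaStar_eq_sink {Q A : Type} {δ : Q → A → Q} {s : Q}
    (hs : ∀ a, δ s a = s) {w : List A} : IsReset δ w ↔ ∀ q, deltaStar δ q w = s :=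
  ⟨fun h q => (h q s).trans (deltaStar_of_isSink hs w),
    fun h q q' => (h q).trans (h q').symm⟩

section
variable {σ : Type}

theorem noYZ_cons {a : Alph σ} {u : List (Alph σ)} :
    noYZ (a :: u) ↔ a ≠ yL ∧ a ≠ zL ∧ noYZ u := by
  simp only [noYZ, List.mem_cons, not_or]
  grind

theorem cons_mem_L1_iff {a : Alph σ} {t : List (Alph σ)} :
    a :: t ∈ L1 ↔ a = yL ∨ (a ≠ yL ∧ a ≠ zL ∧ t ∈ L1) := by
  constructor
  · rintro ⟨_ | ⟨b, u⟩, v, hu, h⟩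
    · exact .inl (List.cons.inj h).1
    · obtain ⟨rfl, rfl⟩ := List.cons.inj h
      obtain ⟨hy, hz, hu⟩ := noYZ_cons.1 hu
      exact .inr ⟨hy, hz, u, v, hu, rfl⟩
  · rintro (rfl | ⟨hy, hz, u, v, hu, rfl⟩)
    · exact ⟨[], t, by simp [noYZ], rfl⟩
    · exact ⟨a :: u, v, noYZ_cons.2 ⟨hy, hz, hu⟩, rfl⟩

theorem cons_mem_L2_iff {a : Alph σ} {t : List (Alph σ)} :
    a :: t ∈ L2 ↔ (a = zL ∧ t ≠ []) ∨ (a ≠ yL ∧ a ≠ zL ∧ t ∈ L2) := by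
  constructor
  · rintro ⟨_ | ⟨b, u⟩, v, hu, hv, h⟩
    · obtain ⟨rfl, rfl⟩ := List.cons.inj h
      exact .inl ⟨rfl, hv⟩
    · obtain ⟨rfl, rfl⟩ := List.cons.inj h
      obtain ⟨hy, hz, hu⟩ := noYZ_cons.1 hu
      exact .inr ⟨hy, hz, u, v, hu, hv, rfl⟩
  · rintro (⟨rfl, ht⟩ | ⟨hy, hz, u, v, hu, hv, rfl⟩)
    · exact ⟨[], t, by simp [noYZ], ht, rfl⟩
    · exact ⟨a :: u, v, noYZ_cons.2 ⟨hy, hz, hu⟩, hv, rfl⟩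

theorem tauB_two (a : Alph σ) : tauB 2 a = 2 := rfl

theorem deltaStar_tauB_one_eq_two_iff {w : List (Alph σ)} :
    deltaStar tauB 1 w = 2 ↔ w ≠ [] := by
  cases w with
  | nil => simp [deltaStar]
  | cons a t => simpa [deltaStar_cons, tauB] using deltaStar_of_isSink tauB_two t

theorem deltaStar_tauB_zero_eq_two_iff {w : List (Alph σ)} :
    deltaStar tauB 0 w = 2 ↔ w ∈ ISet := by
  induction w with
  | nil => simp [deltaStar, ISet, L1, L2]
  | cons a t ih =>
    rw [deltaStar_cons, ISet, Set.mem_union, cons_mem_L1_iff, cons_mem_L2_iff]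
    rcases a with s | k
    · simpa [ISet, tauB, yL, zL] using ih
    · fin_cases k
      · simpa [ISet, tauB, yL, zL] using ih
      · simpa [tauB, yL] using deltaStar_of_isSink tauB_two t
      · simpa [tauB, yL, zL] using deltaStar_tauB_one_eq_two_iff

end

theorem syn_B_eq_I_general (σ : Type) :
    Syn (tauB (σ := σ)) = ISet := by
  ext w
  change IsReset tauB w ↔ w ∈ ISet
  rw [isReset_iff_forall_deltaStar_eq_sink tauB_two]
  refine ⟨fun h => deltaStar_tauB_zero_eq_two_iff.1 (h 0), fun hw q => ?_⟩
  have hne : w ≠ [] := by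
    rintro rfl
    simpa [deltaStar] using deltaStar_tauB_zero_eq_two_iff.2 hw
  fin_cases q
  · exact deltaStar_tauB_zero_eq_two_iff.2 hw
  · exact deltaStar_tauB_one_eq_two_iff.2 hne
  · exact deltaStar_of_isSink tauB_two w

/-- The set of reset words of the three-state DFA ℬ equals I. -/
theorem syn_B_eq_I (σ : Type) [Fintype σ] :
    Syn (tauB (σ := σ)) = ISet :=
  syn_B_eq_I_general σ
end

section
/- Let J = Syn(𝒜). The intersection ⋂_{i=1}^{n} L[M_i] is nonempty if and only if rc(J) > 3, i.e. if and only if no DFA over Δ with at most three states has J as its set of reset words. -/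
/-- The state set Q of the DFA 𝒜: the disjoint union of the state sets `Qst i`
of the DFAs `M i`, together with two new states: `Sum.inr false` is the sink `s`
and `Sum.inr true` is the state `h`. -/
abbrev StA {n : ℕ} (Qst : Fin n → Type) : Type := (Σ i, Qst i) ⊕ Bool

def sA {n : ℕ} {Qst : Fin n → Type} : StA Qst := Sum.inr false
def hA {n : ℕ} {Qst : Fin n → Type} : StA Qst := Sum.inr true

/-- The transition function φ of the DFA 𝒜. -/
def phi {n : ℕ} {σ : Type} {Qst : Fin n → Type}
    (δi : ∀ i, Qst i → σ → Qst i) (qinit : ∀ i, Qst i)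
    (Fi : ∀ i, Set (Qst i)) [∀ i, DecidablePred (· ∈ Fi i)] :
    StA Qst → Alph σ → StA Qst
  | Sum.inl ⟨i, q⟩, Sum.inl a => Sum.inl ⟨i, δi i q a⟩
  | Sum.inl ⟨i, q⟩, Sum.inr k =>
      if k = 0 then Sum.inl ⟨i, qinit i⟩          -- φ(q, x) = qᵢ
      else if k = 1 then sA                        -- φ(q, y) = s
      else if q ∈ Fi i then sA else hA             -- φ(q, z) = s on Fᵢ, h off Fᵢ
  | Sum.inr _, _ => sA                             -- φ(s,·) = φ(h,·) = s

/-- The language accepted by the DFA `M i = ⟨Qst i, σ, δi i, qinit i, Fi i⟩`. -/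
def LM {n : ℕ} {σ : Type} {Qst : Fin n → Type}
    (δi : ∀ i, Qst i → σ → Qst i) (qinit : ∀ i, Qst i)
    (Fi : ∀ i, Set (Qst i)) (i : Fin n) : Set (List σ) :=
  {w | deltaStar (δi i) (qinit i) w ∈ Fi i}

/-- The reset complexity of a language `L` over the alphabet `A`: the minimal
number of states of a DFA over `A` whose set of reset words equals `L`. -/
noncomputable def rc {A : Type} (L : Set (List A)) : ℕ :=
  sInf {m | ∃ (Q : Type) (instQ : Fintype Q), Nonempty Q ∧
    ∃ δ : Q → A → Q, @Fintype.card Q instQ = m ∧ Syn δ = L}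

/-!
If `⋂ L[Mᵢ]` is empty, the reset words of `𝒜` are exactly the words containing `y` or a
non-final `z`, and a three-state automaton has the same reset words. If `w ∈ ⋂ L[Mᵢ]`, then
`z z`, `z x` and `x w z` are reset words of `𝒜` while `z` and `x w x` are not. In an automaton
with at most three states and the same reset words, the images of `z` and of `x w` would be two
distinct sets of at least two states (`x` collapses one but not the other); so they cover all
states and meet, and `z`, which collapses both, would be a reset word.
-/

theorem deltaStar_append {Q A : Type} (δ : Q → A → Q) (q : Q) (u v : List A) :
    deltaStar δ q (u ++ v) = deltaStar δ (deltaStar δ q u) v :=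
  List.foldl_append

theorem IsReset.of_infix {Q A : Type} {δ : Q → A → Q} {u w : List A} (hu : IsReset δ u)
    (huw : u <:+: w) : IsReset δ w := by
  obtain ⟨s, t, rfl⟩ := huw
  intro q q'
  simp only [deltaStar_append]
  rw [hu (deltaStar δ q s) (deltaStar δ q' s)]

theorem union_eq_univ_and_inter_nonempty_of_card_le_three {α : Type} [Finite α]
    (hα : Nat.card α ≤ 3) {s t : Set α} (hs : s.Nontrivial) (ht : t.Nontrivial) (hst : s ≠ t) :
    s ∪ t = Set.univ ∧ (s ∩ t).Nonempty := by
  have hs2 := Set.one_lt_ncard_iff_nontrivial.2 hs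
  have ht2 := Set.one_lt_ncard_iff_nontrivial.2 ht
  have hunion : s ∪ t = Set.univ := by
    by_contra hne
    have hlt := Set.ncard_lt_card hne
    have hs_eq : s = s ∪ t := Set.eq_of_subset_of_ncard_le Set.subset_union_left (by omega)
    have ht_eq : t = s ∪ t := Set.eq_of_subset_of_ncard_le Set.subset_union_right (by omega)
    exact hst (hs_eq.trans ht_eq.symm)
  refine ⟨hunion, Set.nonempty_of_ncard_ne_zero ?_⟩
  have := Set.ncard_union_add_ncard_inter s t
  have := Set.ncard_le_card (s ∪ t)
  omega

theorem isReset_singleton_of_card_le_three {Q A : Type} [Finite Q] (hQ : Nat.card Q ≤ 3)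
    {δ : Q → A → Q} {a b : A} {u : List A}
    (haa : IsReset δ [a, a]) (hab : IsReset δ [a, b]) (hua : IsReset δ (u ++ [a]))
    (hub : ¬ IsReset δ (u ++ [b])) : IsReset δ [a] := by
  by_contra ha
  simp only [IsReset, deltaStar_append, not_forall] at ha hub
  obtain ⟨q₁, q₂, ha⟩ := ha
  obtain ⟨r₁, r₂, hub⟩ := hub
  set S := Set.range fun q => δ q a
  set T := Set.range fun q => deltaStar δ q u
  have hS : S.Nontrivial := ⟨_, ⟨q₁, rfl⟩, _, ⟨q₂, rfl⟩, ha⟩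
  have hT : T.Nontrivial :=
    ⟨_, ⟨r₁, rfl⟩, _, ⟨r₂, rfl⟩, fun h => hub (congrArg (deltaStar δ · [b]) h)⟩
  have hST : S ≠ T := by
    intro hST
    obtain ⟨p₁, hp₁⟩ : deltaStar δ r₁ u ∈ S := hST ▸ ⟨r₁, rfl⟩
    obtain ⟨p₂, hp₂⟩ : deltaStar δ r₂ u ∈ S := hST ▸ ⟨r₂, rfl⟩
    exact hub (hp₁ ▸ hp₂ ▸ hab p₁ p₂)
  obtain ⟨hunion, c, ⟨s, rfl⟩, ⟨t, ht : deltaStar δ t u = δ s a⟩⟩ :=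
    union_eq_univ_and_inter_nonempty_of_card_le_three hQ hS hT hST
  -- `a` collapses both `S` and `T`, which cover all states and share the point `c`
  have hconst : ∀ p, δ p a = δ (δ s a) a := by
    intro p
    rcases hunion.symm ▸ Set.mem_univ p with ⟨r, rfl⟩ | ⟨r, rfl⟩
    · exact haa r s
    · have := hua r t
      simp only [deltaStar_append] at this
      rw [← ht]
      exact this
  exact ha ((hconst q₁).trans (hconst q₂).symm)

section Words

variable {σ : Type}

def YZFree (w : List (Alph σ)) : Prop := yL ∉ w ∧ zL ∉ w

theorem yzFree_or_eq_append_z_or_infix (w : List (Alph σ)) :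
    YZFree w ∨ (∃ u, YZFree u ∧ w = u ++ [zL]) ∨ [yL] <:+: w ∨ ∃ c, [zL, c] <:+: w := by
  induction w using List.reverseRecOn with
  | nil => exact Or.inl ⟨List.not_mem_nil, List.not_mem_nil⟩
  | append_singleton w c ih =>
    have hext : ∀ {v}, v <:+: w → v <:+: w ++ [c] :=
      fun h => h.trans (List.prefix_append w [c]).isInfix
    rcases ih with ⟨hy, hz⟩ | ⟨u, -, rfl⟩ | hy | ⟨d, hz⟩
    · by_cases hcy : c = yL
      · exact Or.inr (Or.inr (Or.inl (hcy ▸ (List.suffix_append w [c]).isInfix)))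
      by_cases hcz : c = zL
      · exact Or.inr (Or.inl ⟨w, ⟨hy, hz⟩, hcz ▸ rfl⟩)
      exact Or.inl ⟨by simp [hy, Ne.symm hcy], by simp [hz, Ne.symm hcz]⟩
    · exact Or.inr (Or.inr (Or.inr ⟨c, by simpa using (List.suffix_append u [zL, c]).isInfix⟩))
    · exact Or.inr (Or.inr (Or.inl (hext hy)))
    · exact Or.inr (Or.inr (Or.inr ⟨d, hext hz⟩))

/-- Such a DFA resets exactly on the words containing `y` or a non-final `z`. -/
structure ResetsOnYZ {Q : Type} (δ : Q → Alph σ → Q) : Prop where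
  y : IsReset δ [yL]
  z_cons (c : Alph σ) : IsReset δ [zL, c]
  not_of_yzFree {u : List (Alph σ)} : YZFree u → ¬ IsReset δ u
  not_append_z {u : List (Alph σ)} : YZFree u → ¬ IsReset δ (u ++ [zL])

theorem ResetsOnYZ.syn_eq {Q Q' : Type} {δ : Q → Alph σ → Q} {δ' : Q' → Alph σ → Q'}
    (h : ResetsOnYZ δ) (h' : ResetsOnYZ δ') : Syn δ = Syn δ' := by
  ext w
  change IsReset δ w ↔ IsReset δ' w
  rcases yzFree_or_eq_append_z_or_infix w with hw | ⟨u, hu, rfl⟩ | hw | ⟨c, hw⟩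
  · exact iff_of_false (h.not_of_yzFree hw) (h'.not_of_yzFree hw)
  · exact iff_of_false (h.not_append_z hu) (h'.not_append_z hu)
  · exact iff_of_true (h.y.of_infix hw) (h'.y.of_infix hw)
  · exact iff_of_true ((h.z_cons c).of_infix hw) ((h'.z_cons c).of_infix hw)

-- state `0`: no `y` or `z` read yet; `1`: the last letter was the first `z`; `2`: sink
def deltaYZ : Fin 3 → Alph σ → Fin 3
  | 0, Sum.inr 1 => 2
  | 0, Sum.inr 2 => 1
  | 0, _ => 0
  | _, _ => 2

theorem deltaStar_deltaYZ_two (w : List (Alph σ)) : deltaStar deltaYZ 2 w = 2 := by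
  induction w with
  | nil => rfl
  | cons c w ih => cases c <;> exact ih

theorem deltaStar_deltaYZ_zero {w : List (Alph σ)} (hw : YZFree w) :
    deltaStar deltaYZ 0 w = 0 := by
  induction w with
  | nil => rfl
  | cons c w ih =>
    obtain ⟨hy, hz⟩ := hw
    rw [List.mem_cons, not_or] at hy hz
    rcases c with a | k
    · exact ih ⟨hy.2, hz.2⟩
    · fin_cases k
      · exact ih ⟨hy.2, hz.2⟩
      · exact absurd rfl hy.1
      · exact absurd rfl hz.1

theorem resetsOnYZ_deltaYZ : ResetsOnYZ (deltaYZ (σ := σ)) where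
  y q q' := by fin_cases q <;> fin_cases q' <;> rfl
  z_cons c q q' := by fin_cases q <;> fin_cases q' <;> cases c <;> rfl
  not_of_yzFree hu h := by
    have := h 0 2
    rw [deltaStar_deltaYZ_zero hu, deltaStar_deltaYZ_two] at this
    exact (by decide : (0 : Fin 3) ≠ 2) this
  not_append_z hu h := by
    have := h 0 2
    rw [deltaStar_append, deltaStar_append, deltaStar_deltaYZ_zero hu,
      deltaStar_deltaYZ_two] at this
    exact (by decide : (1 : Fin 3) ≠ 2) this

end Words

section Construction

variable {n : ℕ} {σ : Type} {Qst : Fin n → Type} {δi : ∀ i, Qst i → σ → Qst i}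
  {qinit : ∀ i, Qst i} {Fi : ∀ i, Set (Qst i)} [∀ i, DecidablePred (· ∈ Fi i)]

local notation "φ" => phi δi qinit Fi

theorem phi_inr (b : Bool) (c : Alph σ) : φ (Sum.inr b) c = sA := by
  cases c <;> rfl

theorem deltaStar_phi_sA (w : List (Alph σ)) : deltaStar φ sA w = sA := by
  induction w with
  | nil => rfl
  | cons c w ih => exact (congrArg (deltaStar φ · w) (phi_inr false c)).trans ih

theorem hA_ne_sA : (hA : StA Qst) ≠ sA := by
  simp [hA, sA]

theorem phi_z (i : Fin n) (p : Qst i) : φ (Sum.inl ⟨i, p⟩) zL = if p ∈ Fi i then sA else hA :=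
  rfl

theorem deltaStar_phi_map_inl (i : Fin n) (p : Qst i) (w : List σ) :
    deltaStar φ (Sum.inl ⟨i, p⟩) (w.map Sum.inl) = Sum.inl ⟨i, deltaStar (δi i) p w⟩ := by
  induction w generalizing p with
  | nil => rfl
  | cons a w ih => exact ih (δi i p a)

/-- On a word over `Σ ∪ {x}`, every initial state follows the run of its own automaton on the
letters after the last `x`. -/
theorem exists_deltaStar_phi_qinit {u : List (Alph σ)} (hu : YZFree u) :
    ∃ w : List σ, ∀ i, deltaStar φ (Sum.inl ⟨i, qinit i⟩) u =
      Sum.inl ⟨i, deltaStar (δi i) (qinit i) w⟩ := by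
  induction u using List.reverseRecOn with
  | nil => exact ⟨[], fun _ => rfl⟩
  | append_singleton u c ih =>
    obtain ⟨hy, hz⟩ := hu
    simp only [List.mem_append, List.mem_singleton, not_or] at hy hz
    obtain ⟨w, hw⟩ := ih ⟨hy.1, hz.1⟩
    rcases c with a | k
    · exact ⟨w ++ [a], fun i => by rw [deltaStar_append, hw, deltaStar_append]; rfl⟩
    · fin_cases k
      · exact ⟨[], fun i => by rw [deltaStar_append, hw]; rfl⟩
      · exact absurd rfl hy.2
      · exact absurd rfl hz.2

theorem not_isReset_phi_of_yzFree (hn : 0 < n) {u : List (Alph σ)} (hu : YZFree u) :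
    ¬ IsReset φ u := by
  intro h
  obtain ⟨w, hw⟩ := exists_deltaStar_phi_qinit (δi := δi) (Fi := Fi) hu
  have := h (Sum.inl ⟨⟨0, hn⟩, qinit _⟩) sA
  rw [hw, deltaStar_phi_sA] at this
  exact Sum.inl_ne_inr this

theorem not_isReset_phi_append_z (hemp : ¬ (⋂ i, LM δi qinit Fi i).Nonempty)
    {u : List (Alph σ)} (hu : YZFree u) : ¬ IsReset φ (u ++ [zL]) := by
  intro h
  obtain ⟨w, hw⟩ := exists_deltaStar_phi_qinit (δi := δi) (Fi := Fi) hu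
  obtain ⟨i, hi⟩ : ∃ i, deltaStar (δi i) (qinit i) w ∉ Fi i := by
    by_contra! hall
    exact hemp ⟨w, Set.mem_iInter.2 hall⟩
  have := h (Sum.inl ⟨i, qinit i⟩) sA
  rw [deltaStar_append, deltaStar_append, hw, deltaStar_phi_sA] at this
  change φ (Sum.inl ⟨i, _⟩) zL = φ sA zL at this
  rw [phi_z, if_neg hi, sA, phi_inr] at this
  exact hA_ne_sA this

theorem isReset_phi_y : IsReset φ [yL] := by
  rintro (⟨i, p⟩ | b) (⟨i', p'⟩ | b') <;> rfl

theorem isReset_phi_z_cons (c : Alph σ) : IsReset φ [zL, c] := by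
  have hz : ∀ q, ∃ b, φ q zL = Sum.inr b := by
    rintro (⟨i, p⟩ | b)
    · rw [phi_z]; split_ifs <;> exact ⟨_, rfl⟩
    · exact ⟨false, phi_inr b zL⟩
  intro q q'
  obtain ⟨b, hb⟩ := hz q
  obtain ⟨b', hb'⟩ := hz q'
  change φ (φ q zL) c = φ (φ q' zL) c
  rw [hb, hb', phi_inr, phi_inr]

theorem not_isReset_phi_z (hn : 0 < n) (hqF : ∀ i, qinit i ∉ Fi i) : ¬ IsReset φ [zL] := by
  intro h
  have := h (Sum.inl ⟨⟨0, hn⟩, qinit _⟩) sA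
  change φ (Sum.inl ⟨_, _⟩) zL = φ sA zL at this
  rw [phi_z, if_neg (hqF _), sA, phi_inr] at this
  exact hA_ne_sA this

theorem isReset_phi_x_append_z {w : List σ} (hw : w ∈ ⋂ i, LM δi qinit Fi i) :
    IsReset φ (xL :: w.map Sum.inl ++ [zL]) := by
  have hs : ∀ q, deltaStar φ q (xL :: w.map Sum.inl ++ [zL]) = sA := by
    rintro (⟨i, p⟩ | b)
    · change deltaStar φ (Sum.inl ⟨i, qinit i⟩) (w.map Sum.inl ++ [zL]) = sA
      rw [deltaStar_append, deltaStar_phi_map_inl]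
      exact if_pos (Set.mem_iInter.1 hw i)
    · change deltaStar φ (φ (Sum.inr b) xL) _ = sA
      rw [phi_inr, deltaStar_phi_sA]
  exact fun q q' => (hs q).trans (hs q').symm

theorem resetsOnYZ_phi (hn : 0 < n) (hemp : ¬ (⋂ i, LM δi qinit Fi i).Nonempty) :
    ResetsOnYZ (phi δi qinit Fi) where
  y := isReset_phi_y
  z_cons := isReset_phi_z_cons
  not_of_yzFree := not_isReset_phi_of_yzFree hn
  not_append_z := not_isReset_phi_append_z hemp

theorem syn_ne_syn_phi (hn : 0 < n) (hqF : ∀ i, qinit i ∉ Fi i) {w : List σ}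
    (hw : w ∈ ⋂ i, LM δi qinit Fi i) {Q : Type} [Finite Q] (hQ : Nat.card Q ≤ 3)
    (δ : Q → Alph σ → Q) : Syn δ ≠ Syn (phi δi qinit Fi) := by
  intro hS
  have hδ : ∀ v, IsReset δ v ↔ IsReset (phi δi qinit Fi) v := fun v => Set.ext_iff.1 hS v
  have hfree : YZFree (xL :: w.map Sum.inl ++ [xL] : List (Alph σ)) := by
    simp [YZFree, xL, yL, zL]
  refine not_isReset_phi_z hn hqF ((hδ [zL]).1 ?_)
  refine isReset_singleton_of_card_le_three hQ (b := xL) (u := xL :: w.map Sum.inl)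
    ?_ ?_ ?_ ?_
  · exact (hδ _).2 (isReset_phi_z_cons zL)
  · exact (hδ _).2 (isReset_phi_z_cons xL)
  · exact (hδ _).2 (isReset_phi_x_append_z hw)
  · exact (hδ _).not.2 (not_isReset_phi_of_yzFree hn hfree)

end Construction

theorem lt_rc_syn_iff {Q₀ A : Type} [Fintype Q₀] [Nonempty Q₀] (δ₀ : Q₀ → A → Q₀) (m : ℕ) :
    m < rc (Syn δ₀) ↔ ∀ (Q : Type) (instQ : Fintype Q), Nonempty Q → ∀ δ : Q → A → Q,
      @Fintype.card Q instQ ≤ m → Syn δ ≠ Syn δ₀ := by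
  refine ⟨fun hm Q instQ hQ δ hcard hS => ?_, fun h => ?_⟩
  · have := lt_of_lt_of_le hm (Nat.sInf_le ⟨Q, instQ, hQ, δ, rfl, hS⟩)
    omega
  · by_contra! hle
    obtain ⟨Q, instQ, hQ, δ, hcard, hS⟩ :=
      Nat.sInf_mem (s := {m | ∃ (Q : Type) (instQ : Fintype Q), Nonempty Q ∧
        ∃ δ : Q → A → Q, @Fintype.card Q instQ = m ∧ Syn δ = Syn δ₀})
        ⟨_, Q₀, inferInstance, inferInstance, δ₀, rfl, rfl⟩
    exact h Q instQ hQ δ (hcard.trans_le hle) hS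

theorem inter_nonempty_iff_rc_gt_three_general
    (n : ℕ) (hn : 0 < n) (σ : Type)
    (Qst : Fin n → Type) [∀ i, Fintype (Qst i)]
    (δi : ∀ i, Qst i → σ → Qst i) (qinit : ∀ i, Qst i)
    (Fi : ∀ i, Set (Qst i)) [∀ i, DecidablePred (· ∈ Fi i)]
    (hqF : ∀ i, qinit i ∉ Fi i) :
    ((⋂ i, LM δi qinit Fi i).Nonempty ↔ 3 < rc (Syn (phi δi qinit Fi))) ∧
    ((⋂ i, LM δi qinit Fi i).Nonempty ↔
      ∀ (Q : Type) (instQ : Fintype Q), Nonempty Q → ∀ δ : Q → Alph σ → Q,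
        @Fintype.card Q instQ ≤ 3 → Syn δ ≠ Syn (phi δi qinit Fi)) := by
  rw [lt_rc_syn_iff, and_self]
  refine ⟨fun ⟨w, hw⟩ Q instQ _ δ hQ => ?_, fun h => ?_⟩
  · exact syn_ne_syn_phi hn hqF hw (Nat.card_eq_fintype_card (α := Q) ▸ hQ) δ
  · by_contra hemp
    exact h (Fin 3) inferInstance ⟨0⟩ deltaYZ (Fintype.card_fin 3).le
      (resetsOnYZ_deltaYZ.syn_eq (resetsOnYZ_phi hn hemp))

/-- ⋂ᵢ L[Mᵢ] ≠ ∅ iff rc(Syn(𝒜)) > 3, i.e. iff no DFA over Δ with at most three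
states has Syn(𝒜) as its set of reset words. -/
theorem inter_nonempty_iff_rc_gt_three
    (n : ℕ) (hn : 0 < n) (σ : Type) [Fintype σ]
    (Qst : Fin n → Type) [∀ i, Fintype (Qst i)]
    (δi : ∀ i, Qst i → σ → Qst i) (qinit : ∀ i, Qst i)
    (Fi : ∀ i, Set (Qst i)) [∀ i, DecidablePred (· ∈ Fi i)]
    (hno : ∀ i (q : Qst i) (a : σ), δi i q a ≠ qinit i)
    (hqF : ∀ i, qinit i ∉ Fi i) :
    ((⋂ i, LM δi qinit Fi i).Nonempty ↔ 3 < rc (Syn (phi δi qinit Fi))) ∧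
    ((⋂ i, LM δi qinit Fi i).Nonempty ↔
      ∀ (Q : Type) (instQ : Fintype Q), Nonempty Q → ∀ δ : Q → Alph σ → Q,
        @Fintype.card Q instQ ≤ 3 → Syn δ ≠ Syn (phi δi qinit Fi)) :=
  inter_nonempty_iff_rc_gt_three_general n hn σ Qst δi qinit Fi hqF
end
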